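/- In the setting of the two preceding statements (a jointly measurable one-parameter process Φ(t) = Φ(t,0) and two-parameter process Φ(t,s) on a probability space, X₀ ∈ ℝ^{n×d}, B ∈ ℝ^{n×m}, a deterministic square-integrable control u, the weak semigroup property E[Φ(t,s) B Bᵀ Φ(t,s)ᵀ] = E[Φ(t−s) B Bᵀ Φ(t−s)ᵀ] for 0 ≤ s ≤ t ≤ T, and all Bochner integrals existing), define x(t) := Φ(t) X₀ z + ∫₀ᵗ Φ(t,s) B u(s) ds and the total Gramian P_T := P_{x₀,T} + P_{u,T}, where P_{x₀,T} = E[∫₀ᵀ Φ(t) X₀ X₀ᵀ Φ(t)ᵀ dt] and P_{u,T} = E[∫₀ᵀ Φ(s) B Bᵀ Φ(s)ᵀ ds]. Then for every z ∈ ℝ^d and w ∈ ℝ^n, ∫₀ᵀ E[⟨x(t), w⟩²] dt ≤ 2 (wᵀ P_T w) · max{‖z‖₂², T ∫₀ᵀ ‖u(s)‖₂² ds}. -/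

import Mathlib

/-!
Pathwise, `⟨x(t), w⟩² ≤ 2⟨Φ(t) X₀ z, w⟩² + 2⟨∫₀ᵗ Φ(t,s) B u(s) ds, w⟩²`, and Cauchy–Schwarz
bounds the two terms by `‖z‖² · wᵀΦ(t)X₀X₀ᵀΦ(t)ᵀw` and
`(∫₀ᵗ ‖u‖²) · ∫₀ᵗ wᵀΦ(t,s)BBᵀΦ(t,s)ᵀw ds`. After taking expectations, the weak semigroup property
replaces `Φ(t,s)` by `Φ(t-s)`, and the substitution `τ = t - s` bounds the second term by
`wᵀ P_{u,T} w`. Integrating over `t ∈ [0, T]` yields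
`2‖z‖² · wᵀP_{x₀,T}w + 2T (∫₀ᵀ ‖u‖²) · wᵀP_{u,T}w`.
-/

open MeasureTheory Matrix

attribute [local instance] Matrix.normedAddCommGroup Matrix.normedSpace

-- The norm topology of the local instances agrees with `instTopologicalSpaceMatrix` only up to
-- unfolding, so instance search does not find this on its own.
abbrev Matrix.continuousENorm {m n : Type*} [Fintype m] [Fintype n] :
    ContinuousENorm (Matrix m n ℝ) :=
  SeminormedAddGroup.toContinuousENorm

attribute [local instance] Matrix.continuousENorm

section QuadraticForm

variable {ι ι' κ : Type*} [Fintype ι] [Fintype ι'] [Fintype κ]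

theorem dotProduct_mul_mul_transpose_mulVec_eq_sum_sq (P : Matrix ι ι' ℝ)
    (A : Matrix ι' κ ℝ) (w : ι → ℝ) :
    w ⬝ᵥ (P * A * Aᵀ * Pᵀ) *ᵥ w = ∑ k, (w ᵥ* (P * A)) k ^ 2 := by
  rw [Matrix.mul_assoc (P * A), ← transpose_mul, ← mulVec_mulVec, dotProduct_mulVec,
    mulVec_transpose]
  simp only [dotProduct, sq]

theorem dotProduct_mul_mul_transpose_mulVec_nonneg (P : Matrix ι ι' ℝ)
    (A : Matrix ι' κ ℝ) (w : ι → ℝ) : 0 ≤ w ⬝ᵥ (P * A * Aᵀ * Pᵀ) *ᵥ w := by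
  rw [dotProduct_mul_mul_transpose_mulVec_eq_sum_sq]
  positivity

theorem sq_mulVec_mulVec_dotProduct_le (P : Matrix ι ι' ℝ) (A : Matrix ι' κ ℝ)
    (v : κ → ℝ) (w : ι → ℝ) :
    ((P *ᵥ (A *ᵥ v)) ⬝ᵥ w) ^ 2 ≤ (∑ k, v k ^ 2) * (w ⬝ᵥ (P * A * Aᵀ * Pᵀ) *ᵥ w) := by
  rw [dotProduct_mul_mul_transpose_mulVec_eq_sum_sq, mulVec_mulVec, dotProduct_comm,
    dotProduct_mulVec, mul_comm]
  exact Finset.sum_mul_sq_le_sq_mul_sq _ _ _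

variable (w : ι → ℝ)

noncomputable def quadFormCLM : Matrix ι ι ℝ →L[ℝ] ℝ :=
  LinearMap.toContinuousLinearMap
    { toFun M := w ⬝ᵥ M *ᵥ w
      map_add' M N := by simp only [add_mulVec, dotProduct_add]
      map_smul' c M := by simp only [smul_mulVec, dotProduct_smul, RingHom.id_apply] }

theorem dotProduct_integral_mulVec {α : Type*} [MeasurableSpace α] {μ : Measure α}
    {M : α → Matrix ι ι ℝ} (hM : Integrable M μ) :
    w ⬝ᵥ (∫ a, M a ∂μ) *ᵥ w = ∫ a, w ⬝ᵥ M a *ᵥ w ∂μ :=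
  ((quadFormCLM w).integral_comp_comm hM).symm

theorem dotProduct_integral_mul_mul_transpose_mulVec_nonneg {α : Type*} [MeasurableSpace α]
    {μ : Measure α} (P : α → Matrix ι ι' ℝ) (A : Matrix ι' κ ℝ) :
    0 ≤ w ⬝ᵥ (∫ a, P a * A * Aᵀ * (P a)ᵀ ∂μ) *ᵥ w := by
  by_cases hP : Integrable (fun a => P a * A * Aᵀ * (P a)ᵀ) μ
  · rw [dotProduct_integral_mulVec w hP]
    exact integral_nonneg fun a => dotProduct_mul_mul_transpose_mulVec_nonneg _ _ w
  · rw [integral_undef hP, zero_mulVec, dotProduct_zero]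

theorem dotProduct_integral_integral_mulVec {α β : Type*} [MeasurableSpace α]
    [MeasurableSpace β] {μ : Measure α} {ν : Measure β} [SFinite μ] [SFinite ν]
    {M : α → β → Matrix ι ι ℝ} (hM : Integrable (Function.uncurry M) (μ.prod ν)) :
    w ⬝ᵥ (∫ b, ∫ a, M a b ∂μ ∂ν) *ᵥ w = ∫ b, ∫ a, w ⬝ᵥ M a b *ᵥ w ∂μ ∂ν := by
  rw [dotProduct_integral_mulVec (M := fun b => ∫ a, M a b ∂μ) w hM.integral_prod_right]
  refine integral_congr_ae ?_
  filter_upwards [hM.prod_left_ae] with b hb using dotProduct_integral_mulVec w hb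

theorem dotProduct_integral_integral_swap_mulVec {α β : Type*} [MeasurableSpace α]
    [MeasurableSpace β] {μ : Measure α} {ν : Measure β} [SFinite μ] [SFinite ν]
    {M : α → β → Matrix ι ι ℝ} (hM : Integrable (Function.uncurry M) (μ.prod ν)) :
    w ⬝ᵥ (∫ b, ∫ a, M a b ∂μ ∂ν) *ᵥ w = ∫ a, w ⬝ᵥ (∫ b, M a b ∂ν) *ᵥ w ∂μ := by
  rw [← integral_integral_swap hM,
    dotProduct_integral_mulVec (M := fun a => ∫ b, M a b ∂ν) w hM.integral_prod_left]

end QuadraticForm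

section CauchySchwarz

variable {α : Type*} [MeasurableSpace α] {μ : Measure α} {g h : α → ℝ}

theorem sq_integral_le_integral_mul_integral {f : α → ℝ} (hf : Integrable f μ)
    (hg : Integrable g μ) (hh : Integrable h μ) (hg0 : 0 ≤ g) (hh0 : 0 ≤ h)
    (hfgh : ∀ a, f a ^ 2 ≤ g a * h a) :
    (∫ a, f a ∂μ) ^ 2 ≤ (∫ a, g a ∂μ) * ∫ a, h a ∂μ := by
  -- `∫ (g x² + 2 f x + h)` is a nonnegative quadratic in `x`, so its discriminant is `≤ 0`.
  have hquad : ∀ x : ℝ, 0 ≤ (∫ a, g a ∂μ) * (x * x) + 2 * (∫ a, f a ∂μ) * x + ∫ a, h a ∂μ := by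
    intro x
    have hpt : ∀ a, 0 ≤ g a * (x * x) + 2 * f a * x + h a := fun a => by
      have hsq : (2 * f a * x) ^ 2 ≤ (g a * (x * x) + h a) ^ 2 := by
        nlinarith [sq_nonneg (g a * (x * x) - h a),
          mul_le_mul_of_nonneg_right (hfgh a) (mul_self_nonneg x)]
      have := abs_le_of_sq_le_sq' hsq
        (add_nonneg (mul_nonneg (hg0 a) (mul_self_nonneg x)) (hh0 a))
      linarith
    calc (0 : ℝ) ≤ ∫ a, (g a * (x * x) + 2 * f a * x + h a) ∂μ := integral_nonneg hpt
      _ = _ := by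
        rw [integral_add (by fun_prop) hh, integral_add (by fun_prop) (by fun_prop),
          integral_mul_const, integral_mul_const, integral_const_mul]
  have := discrim_le_zero hquad
  rw [discrim] at this
  linarith

theorem sq_integral_dotProduct_le {ι : Type*} [Fintype ι] {v : α → ι → ℝ} (w : ι → ℝ)
    (hg : Integrable g μ) (hh : Integrable h μ) (hg0 : 0 ≤ g) (hh0 : 0 ≤ h)
    (hvgh : ∀ a, (v a ⬝ᵥ w) ^ 2 ≤ g a * h a) :
    ((∫ a, v a ∂μ) ⬝ᵥ w) ^ 2 ≤ (∫ a, g a ∂μ) * ∫ a, h a ∂μ := by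
  by_cases hv : Integrable v μ
  · let L : (ι → ℝ) →L[ℝ] ℝ := LinearMap.toContinuousLinearMap ((dotProductBilin ℝ ℝ).flip w)
    have hLv : (∫ a, v a ∂μ) ⬝ᵥ w = ∫ a, v a ⬝ᵥ w ∂μ := (L.integral_comp_comm hv).symm
    rw [hLv]
    exact sq_integral_le_integral_mul_integral (L.integrable_comp hv) hg hh hg0 hh0 hvgh
  · rw [integral_undef hv, zero_dotProduct, sq, zero_mul]
    exact mul_nonneg (integral_nonneg hg0) (integral_nonneg hh0)

end CauchySchwarz

theorem setIntegral_Icc_comp_sub_left {E : Type*} [NormedAddCommGroup E] [NormedSpace ℝ E]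
    (f : ℝ → E) {t : ℝ} (ht : 0 ≤ t) :
    ∫ s in Set.Icc 0 t, f (t - s) = ∫ s in Set.Icc 0 t, f s := by
  simp only [integral_Icc_eq_integral_Ioc, ← intervalIntegral.integral_of_le ht,
    intervalIntegral.integral_comp_sub_left, sub_self, sub_zero]

section Solution

variable {ι κ κ' : Type*} [Fintype ι] [Fintype κ] [Fintype κ']

theorem sq_variationOfConstants_dotProduct_le {α : Type*} [MeasurableSpace α] {ν : Measure α}
    (Φ₀ : Matrix ι ι ℝ) (X₀ : Matrix ι κ ℝ) (z : κ → ℝ) (Ψ : α → Matrix ι ι ℝ)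
    (B : Matrix ι κ' ℝ) {u : α → κ' → ℝ} (w : ι → ℝ)
    (hu : Integrable (fun s => ∑ i, u s i ^ 2) ν)
    (hΨ : Integrable (fun s => w ⬝ᵥ (Ψ s * B * Bᵀ * (Ψ s)ᵀ) *ᵥ w) ν) :
    ((Φ₀ *ᵥ (X₀ *ᵥ z) + ∫ s, Ψ s *ᵥ (B *ᵥ u s) ∂ν) ⬝ᵥ w) ^ 2
      ≤ 2 * (∑ i, z i ^ 2) * (w ⬝ᵥ (Φ₀ * X₀ * X₀ᵀ * Φ₀ᵀ) *ᵥ w)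
        + 2 * (∫ s, ∑ i, u s i ^ 2 ∂ν) * ∫ s, w ⬝ᵥ (Ψ s * B * Bᵀ * (Ψ s)ᵀ) *ᵥ w ∂ν := by
  have hfree := sq_mulVec_mulVec_dotProduct_le Φ₀ X₀ z w
  have hforced := sq_integral_dotProduct_le (v := fun s => Ψ s *ᵥ (B *ᵥ u s)) w hu hΨ
    (fun s => by positivity) (fun s => dotProduct_mul_mul_transpose_mulVec_nonneg _ _ w)
    (fun s => sq_mulVec_mulVec_dotProduct_le _ _ _ w)
  rw [add_dotProduct]
  nlinarith [add_sq_le (a := (Φ₀ *ᵥ (X₀ *ᵥ z)) ⬝ᵥ w) (b := (∫ s, Ψ s *ᵥ (B *ᵥ u s) ∂ν) ⬝ᵥ w)]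

variable {Ω : Type*} [MeasurableSpace Ω] {μ : Measure Ω} [SFinite μ]

theorem integral_integral_dotProduct_mulVec_le_of_semigroup (Ψ Φ : ℝ → Ω → Matrix ι ι ℝ)
    (B : Matrix ι κ' ℝ) (w : ι → ℝ) {t T : ℝ} (ht : 0 ≤ t) (htT : t ≤ T)
    (hsemi : ∀ s ∈ Set.Icc 0 t, ∫ ω, Ψ s ω * B * Bᵀ * (Ψ s ω)ᵀ ∂μ
      = ∫ ω, Φ (t - s) ω * B * Bᵀ * (Φ (t - s) ω)ᵀ ∂μ)
    (hΨ : Integrable (fun p : ℝ × Ω => Ψ p.1 p.2 * B * Bᵀ * (Ψ p.1 p.2)ᵀ)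
      ((volume.restrict (Set.Icc 0 t)).prod μ))
    (hΦ : IntegrableOn (fun τ => ∫ ω, Φ τ ω * B * Bᵀ * (Φ τ ω)ᵀ ∂μ) (Set.Icc 0 T)) :
    ∫ ω, (∫ s in Set.Icc 0 t, w ⬝ᵥ (Ψ s ω * B * Bᵀ * (Ψ s ω)ᵀ) *ᵥ w) ∂μ
      ≤ ∫ τ in Set.Icc 0 T, w ⬝ᵥ (∫ ω, Φ τ ω * B * Bᵀ * (Φ τ ω)ᵀ ∂μ) *ᵥ w := by
  have hsub : Set.Icc 0 t ⊆ Set.Icc 0 T := Set.Icc_subset_Icc_right htT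
  rw [← dotProduct_integral_integral_mulVec w hΨ, ← integral_integral_swap hΨ,
    setIntegral_congr_fun measurableSet_Icc hsemi,
    setIntegral_Icc_comp_sub_left (fun τ => ∫ ω, Φ τ ω * B * Bᵀ * (Φ τ ω)ᵀ ∂μ) ht,
    dotProduct_integral_mulVec w (hΦ.mono_set hsub)]
  exact setIntegral_mono_set ((quadFormCLM w).integrable_comp hΦ)
    (.of_forall fun τ => dotProduct_integral_mul_mul_transpose_mulVec_nonneg w _ B)
    hsub.eventuallyLE

theorem integral_sq_variationOfConstants_dotProduct_le (Ψ Φ : ℝ → Ω → Matrix ι ι ℝ)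
    (X₀ : Matrix ι κ ℝ) (B : Matrix ι κ' ℝ) (z : κ → ℝ) {u : ℝ → κ' → ℝ} (w : ι → ℝ)
    {t T : ℝ} (ht : 0 ≤ t) (htT : t ≤ T)
    (hu : IntegrableOn (fun s => ∑ i, u s i ^ 2) (Set.Icc 0 T))
    (hsemi : ∀ s ∈ Set.Icc 0 t, ∫ ω, Ψ s ω * B * Bᵀ * (Ψ s ω)ᵀ ∂μ
      = ∫ ω, Φ (t - s) ω * B * Bᵀ * (Φ (t - s) ω)ᵀ ∂μ)
    (hΨ : Integrable (fun p : ℝ × Ω => Ψ p.1 p.2 * B * Bᵀ * (Ψ p.1 p.2)ᵀ)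
      ((volume.restrict (Set.Icc 0 t)).prod μ))
    (hΦ : IntegrableOn (fun τ => ∫ ω, Φ τ ω * B * Bᵀ * (Φ τ ω)ᵀ ∂μ) (Set.Icc 0 T))
    (hΦt : Integrable (fun ω => Φ t ω * X₀ * X₀ᵀ * (Φ t ω)ᵀ) μ) :
    ∫ ω, ((Φ t ω *ᵥ (X₀ *ᵥ z) + ∫ s in Set.Icc 0 t, Ψ s ω *ᵥ (B *ᵥ u s)) ⬝ᵥ w) ^ 2 ∂μ
      ≤ 2 * (∑ i, z i ^ 2) * (w ⬝ᵥ (∫ ω, Φ t ω * X₀ * X₀ᵀ * (Φ t ω)ᵀ ∂μ) *ᵥ w)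
        + 2 * (∫ s in Set.Icc 0 T, ∑ i, u s i ^ 2)
          * ∫ τ in Set.Icc 0 T, w ⬝ᵥ (∫ ω, Φ τ ω * B * Bᵀ * (Φ τ ω)ᵀ ∂μ) *ᵥ w := by
  set c := ∫ s in Set.Icc 0 T, ∑ i, u s i ^ 2
  set g := fun s ω => w ⬝ᵥ (Ψ s ω * B * Bᵀ * (Ψ s ω)ᵀ) *ᵥ w
  have hg : Integrable (Function.uncurry g) ((volume.restrict (Set.Icc 0 t)).prod μ) :=
    (quadFormCLM w).integrable_comp hΨ
  have hX : Integrable (fun ω => w ⬝ᵥ (Φ t ω * X₀ * X₀ᵀ * (Φ t ω)ᵀ) *ᵥ w) μ :=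
    (quadFormCLM w).integrable_comp hΦt
  have hG : Integrable (fun ω => ∫ s in Set.Icc 0 t, g s ω) μ := hg.integral_prod_right
  have hct : ∫ s in Set.Icc 0 t, ∑ i, u s i ^ 2 ≤ c :=
    setIntegral_mono_set hu (.of_forall fun s => by positivity)
      (Set.Icc_subset_Icc_right htT).eventuallyLE
  have hpathwise : ∀ᵐ ω ∂μ,
      ((Φ t ω *ᵥ (X₀ *ᵥ z) + ∫ s in Set.Icc 0 t, Ψ s ω *ᵥ (B *ᵥ u s)) ⬝ᵥ w) ^ 2
        ≤ 2 * (∑ i, z i ^ 2) * (w ⬝ᵥ (Φ t ω * X₀ * X₀ᵀ * (Φ t ω)ᵀ) *ᵥ w)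
          + 2 * c * ∫ s in Set.Icc 0 t, g s ω := by
    filter_upwards [hg.prod_left_ae] with ω hgω
    refine (sq_variationOfConstants_dotProduct_le _ X₀ z _ B w
      (hu.mono_set (Set.Icc_subset_Icc_right htT)) hgω).trans ?_
    gcongr
    exact integral_nonneg fun s => dotProduct_mul_mul_transpose_mulVec_nonneg _ B w
  calc _ ≤ ∫ ω, (2 * (∑ i, z i ^ 2) * (w ⬝ᵥ (Φ t ω * X₀ * X₀ᵀ * (Φ t ω)ᵀ) *ᵥ w)
          + 2 * c * ∫ s in Set.Icc 0 t, g s ω) ∂μ :=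
        integral_mono_of_nonneg (.of_forall fun ω => sq_nonneg _)
          ((hX.const_mul _).add (hG.const_mul _)) hpathwise
    _ = 2 * (∑ i, z i ^ 2) * (w ⬝ᵥ (∫ ω, Φ t ω * X₀ * X₀ᵀ * (Φ t ω)ᵀ ∂μ) *ᵥ w)
          + 2 * c * ∫ ω, (∫ s in Set.Icc 0 t, g s ω) ∂μ := by
        rw [integral_add (hX.const_mul _) (hG.const_mul _), integral_const_mul,
          integral_const_mul, dotProduct_integral_mulVec w hΦt]
    _ ≤ _ := by
        gcongr
        exact integral_integral_dotProduct_mulVec_le_of_semigroup Ψ Φ B w ht htT hsemi hΨ hΦ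

theorem two_mul_add_mul_le_two_mul_add_mul_max {a c T P Q : ℝ} (ha : 0 ≤ a) (hc : 0 ≤ c)
    (hP : 0 ≤ P) (hQ : 0 ≤ Q) :
    2 * a * P + 2 * (max T 0 * c) * Q ≤ 2 * (P + Q) * max a (T * c) := by
  have hTc : max T 0 * c ≤ max a (T * c) := by
    rw [max_mul_of_nonneg _ _ hc, zero_mul]
    exact max_le (le_max_right _ _) (ha.trans (le_max_left _ _))
  nlinarith [mul_le_mul_of_nonneg_right (le_max_left a (T * c)) hP,
    mul_le_mul_of_nonneg_right hTc hQ]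

theorem setIntegral_integral_sq_variationOfConstants_dotProduct_le
    (Φ : ℝ → ℝ → Ω → Matrix ι ι ℝ) (X₀ : Matrix ι κ ℝ) (B : Matrix ι κ' ℝ) (z : κ → ℝ)
    {u : ℝ → κ' → ℝ} (w : ι → ℝ) {T : ℝ}
    (hu : IntegrableOn (fun s => ∑ i, u s i ^ 2) (Set.Icc 0 T))
    (hsemi : ∀ s t : ℝ, 0 ≤ s → s ≤ t → t ≤ T →
      ∫ ω, Φ t s ω * B * Bᵀ * (Φ t s ω)ᵀ ∂μ = ∫ ω, Φ (t - s) 0 ω * B * Bᵀ * (Φ (t - s) 0 ω)ᵀ ∂μ)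
    (hintX : Integrable (fun p : ℝ × Ω => Φ p.1 0 p.2 * X₀ * X₀ᵀ * (Φ p.1 0 p.2)ᵀ)
      ((volume.restrict (Set.Icc 0 T)).prod μ))
    (hintB : Integrable (fun p : ℝ × Ω => Φ p.1 0 p.2 * B * Bᵀ * (Φ p.1 0 p.2)ᵀ)
      ((volume.restrict (Set.Icc 0 T)).prod μ))
    (hintB2 : ∀ t ∈ Set.Icc 0 T,
      Integrable (fun p : ℝ × Ω => Φ t p.1 p.2 * B * Bᵀ * (Φ t p.1 p.2)ᵀ)
        ((volume.restrict (Set.Icc 0 t)).prod μ)) :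
    ∫ t in Set.Icc 0 T,
        ∫ ω, ((Φ t 0 ω *ᵥ (X₀ *ᵥ z) + ∫ s in Set.Icc 0 t, Φ t s ω *ᵥ (B *ᵥ u s)) ⬝ᵥ w) ^ 2 ∂μ
      ≤ 2 * ((∫ t in Set.Icc 0 T, w ⬝ᵥ (∫ ω, Φ t 0 ω * X₀ * X₀ᵀ * (Φ t 0 ω)ᵀ ∂μ) *ᵥ w)
          + ∫ τ in Set.Icc 0 T, w ⬝ᵥ (∫ ω, Φ τ 0 ω * B * Bᵀ * (Φ τ 0 ω)ᵀ ∂μ) *ᵥ w)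
        * max (∑ i, z i ^ 2) (T * ∫ s in Set.Icc 0 T, ∑ i, u s i ^ 2) := by
  set c := ∫ s in Set.Icc 0 T, ∑ i, u s i ^ 2
  set Q := ∫ τ in Set.Icc 0 T, w ⬝ᵥ (∫ ω, Φ τ 0 ω * B * Bᵀ * (Φ τ 0 ω)ᵀ ∂μ) *ᵥ w
  set q := fun t => w ⬝ᵥ (∫ ω, Φ t 0 ω * X₀ * X₀ᵀ * (Φ t 0 ω)ᵀ ∂μ) *ᵥ w
  have hq : IntegrableOn q (Set.Icc 0 T) :=
    (quadFormCLM w).integrable_comp hintX.integral_prod_left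
  have hmoment : ∀ᵐ t ∂volume.restrict (Set.Icc 0 T),
      ∫ ω, ((Φ t 0 ω *ᵥ (X₀ *ᵥ z) + ∫ s in Set.Icc 0 t, Φ t s ω *ᵥ (B *ᵥ u s)) ⬝ᵥ w) ^ 2 ∂μ
        ≤ 2 * (∑ i, z i ^ 2) * q t + 2 * c * Q := by
    filter_upwards [ae_restrict_mem measurableSet_Icc, hintX.prod_right_ae] with t ht hXt
    exact integral_sq_variationOfConstants_dotProduct_le (fun s ω => Φ t s ω)
      (fun τ ω => Φ τ 0 ω) X₀ B z w ht.1 ht.2 hu (fun s hs => hsemi s t hs.1 hs.2 ht.2)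
      (hintB2 t ht) hintB.integral_prod_left hXt
  calc _ ≤ ∫ t in Set.Icc 0 T, (2 * (∑ i, z i ^ 2) * q t + 2 * c * Q) :=
        integral_mono_of_nonneg (.of_forall fun t => integral_nonneg fun ω => sq_nonneg _)
          ((hq.const_mul _).add (integrable_const _)) hmoment
    _ = 2 * (∑ i, z i ^ 2) * (∫ t in Set.Icc 0 T, q t) + 2 * (max T 0 * c) * Q := by
        rw [integral_add (hq.const_mul _) (integrable_const _), integral_const_mul,
          setIntegral_const, Real.volume_real_Icc, sub_zero, smul_eq_mul]
        ring
    _ ≤ _ := two_mul_add_mul_le_two_mul_add_mul_max (by positivity) (by positivity)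
        (integral_nonneg fun t => dotProduct_integral_mul_mul_transpose_mulVec_nonneg w _ X₀)
        (integral_nonneg fun τ => dotProduct_integral_mul_mul_transpose_mulVec_nonneg w _ B)

end Solution

theorem gramian_dominant_subspace_full_state_general
    {n d m : ℕ} {Ω : Type*} [MeasurableSpace Ω] (μ : Measure Ω) [IsProbabilityMeasure μ]
    (T : ℝ)
    (Φ : ℝ → ℝ → Ω → Matrix (Fin n) (Fin n) ℝ)  -- Φ t s ω, with Φ(τ) := Φ τ 0
    (X₀ : Matrix (Fin n) (Fin d) ℝ) (B : Matrix (Fin n) (Fin m) ℝ)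
    (u : ℝ → Fin m → ℝ)
    (hu : IntegrableOn (fun s => ∑ i, u s i ^ 2) (Set.Icc (0 : ℝ) T))
    (hsemi : ∀ s t : ℝ, 0 ≤ s → s ≤ t → t ≤ T →
      (∫ ω, Φ t s ω * B * Bᵀ * (Φ t s ω)ᵀ ∂μ)
        = ∫ ω, Φ (t - s) 0 ω * B * Bᵀ * (Φ (t - s) 0 ω)ᵀ ∂μ)
    (hintX : @Integrable _ _ SeminormedAddGroup.toContinuousENorm _ _ (fun p : ℝ × Ω => Φ p.1 0 p.2 * X₀ * X₀ᵀ * (Φ p.1 0 p.2)ᵀ)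
      ((volume.restrict (Set.Icc 0 T)).prod μ))
    (hintB : @Integrable _ _ SeminormedAddGroup.toContinuousENorm _ _ (fun p : ℝ × Ω => Φ p.1 0 p.2 * B * Bᵀ * (Φ p.1 0 p.2)ᵀ)
      ((volume.restrict (Set.Icc 0 T)).prod μ))
    (hintB2 : ∀ t ∈ Set.Icc (0 : ℝ) T,
      @Integrable _ _ SeminormedAddGroup.toContinuousENorm _ _ (fun p : ℝ × Ω => Φ t p.1 p.2 * B * Bᵀ * (Φ t p.1 p.2)ᵀ)
        ((volume.restrict (Set.Icc 0 t)).prod μ))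
    (z : Fin d → ℝ)
    (x : ℝ → Ω → Fin n → ℝ)
    (hx : ∀ t ω, x t ω
      = Φ t 0 ω *ᵥ (X₀ *ᵥ z) + ∫ s in Set.Icc (0 : ℝ) t, Φ t s ω *ᵥ (B *ᵥ u s))
    (Px₀ Pu PT : Matrix (Fin n) (Fin n) ℝ)
    (hPx₀ : Px₀ = ∫ ω, (∫ t in Set.Icc (0 : ℝ) T, Φ t 0 ω * X₀ * X₀ᵀ * (Φ t 0 ω)ᵀ) ∂μ)
    (hPu : Pu = ∫ ω, (∫ s in Set.Icc (0 : ℝ) T, Φ s 0 ω * B * Bᵀ * (Φ s 0 ω)ᵀ) ∂μ)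
    (hPT : PT = Px₀ + Pu)
    (w : Fin n → ℝ) :
    (∫ t in Set.Icc (0 : ℝ) T, ∫ ω, (x t ω ⬝ᵥ w) ^ 2 ∂μ)
      ≤ 2 * (w ⬝ᵥ PT *ᵥ w)
        * max (∑ i, z i ^ 2) (T * ∫ s in Set.Icc (0 : ℝ) T, ∑ i, u s i ^ 2) := by
  simp only [hx]
  rw [hPT, add_mulVec, dotProduct_add, hPx₀, hPu, dotProduct_integral_integral_swap_mulVec w hintX,
    dotProduct_integral_integral_swap_mulVec w hintB]
  exact setIntegral_integral_sq_variationOfConstants_dotProduct_le Φ X₀ B z w hu hsemi hintX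
    hintB hintB2

/-- In the setting of the two previous statements (fundamental solution `Φ(t,s)` with
`Φ(τ) = Φ(τ,0)`, initial-state matrix `X₀`, input matrix `B`, deterministic
square-integrable control `u`, the weak semigroup property in second moments, and all
Bochner integrals existing), the solution
`x(t) = Φ(t) X₀ z + ∫₀ᵗ Φ(t,s) B u(s) ds` and the total Gramian
`P_T = P_{x₀,T} + P_{u,T}` satisfy
`∫₀ᵀ E[⟨x(t), w⟩²] dt ≤ 2 (wᵀ P_T w) max{‖z‖₂², T ∫₀ᵀ ‖u(s)‖₂² ds}`. -/
theorem gramian_dominant_subspace_full_state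
    {n d m : ℕ} {Ω : Type*} [MeasurableSpace Ω] (μ : Measure Ω) [IsProbabilityMeasure μ]
    (T : ℝ) (hT : 0 < T)
    (Φ : ℝ → ℝ → Ω → Matrix (Fin n) (Fin n) ℝ)  -- Φ t s ω, with Φ(τ) := Φ τ 0
    (X₀ : Matrix (Fin n) (Fin d) ℝ) (B : Matrix (Fin n) (Fin m) ℝ)
    (u : ℝ → Fin m → ℝ)
    (hu : IntegrableOn (fun s => ∑ i, u s i ^ 2) (Set.Icc (0 : ℝ) T))
    (hsemi : ∀ s t : ℝ, 0 ≤ s → s ≤ t → t ≤ T →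
      (∫ ω, Φ t s ω * B * Bᵀ * (Φ t s ω)ᵀ ∂μ)
        = ∫ ω, Φ (t - s) 0 ω * B * Bᵀ * (Φ (t - s) 0 ω)ᵀ ∂μ)
    (hintX : @Integrable _ _ SeminormedAddGroup.toContinuousENorm _ _ (fun p : ℝ × Ω => Φ p.1 0 p.2 * X₀ * X₀ᵀ * (Φ p.1 0 p.2)ᵀ)
      ((volume.restrict (Set.Icc 0 T)).prod μ))
    (hintB : @Integrable _ _ SeminormedAddGroup.toContinuousENorm _ _ (fun p : ℝ × Ω => Φ p.1 0 p.2 * B * Bᵀ * (Φ p.1 0 p.2)ᵀ)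
      ((volume.restrict (Set.Icc 0 T)).prod μ))
    (hintB2 : ∀ t ∈ Set.Icc (0 : ℝ) T,
      @Integrable _ _ SeminormedAddGroup.toContinuousENorm _ _ (fun p : ℝ × Ω => Φ t p.1 p.2 * B * Bᵀ * (Φ t p.1 p.2)ᵀ)
        ((volume.restrict (Set.Icc 0 t)).prod μ))
    (z : Fin d → ℝ)
    (x : ℝ → Ω → Fin n → ℝ)
    (hx : ∀ t ω, x t ω
      = Φ t 0 ω *ᵥ (X₀ *ᵥ z) + ∫ s in Set.Icc (0 : ℝ) t, Φ t s ω *ᵥ (B *ᵥ u s))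
    (Px₀ Pu PT : Matrix (Fin n) (Fin n) ℝ)
    (hPx₀ : Px₀ = ∫ ω, (∫ t in Set.Icc (0 : ℝ) T, Φ t 0 ω * X₀ * X₀ᵀ * (Φ t 0 ω)ᵀ) ∂μ)
    (hPu : Pu = ∫ ω, (∫ s in Set.Icc (0 : ℝ) T, Φ s 0 ω * B * Bᵀ * (Φ s 0 ω)ᵀ) ∂μ)
    (hPT : PT = Px₀ + Pu)
    (w : Fin n → ℝ) :
    (∫ t in Set.Icc (0 : ℝ) T, ∫ ω, (x t ω ⬝ᵥ w) ^ 2 ∂μ)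
      ≤ 2 * (w ⬝ᵥ PT *ᵥ w)
        * max (∑ i, z i ^ 2) (T * ∫ s in Set.Icc (0 : ℝ) T, ∑ i, u s i ^ 2) :=
  gramian_dominant_subspace_full_state_general μ T Φ X₀ B u hu hsemi hintX hintB hintB2 z x hx Px₀
    Pu PT hPx₀ hPu hPT w
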